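/- arXiv:1604.08403 — 2 statements merged into one kernel-verified Lean document; each statement's English description precedes it below -/
import Mathlib

section
/- Let T = [0,1] with Lebesgue measure λ, let (Θ, 𝒜, π) be a probability space, let θ ↦ S_θ assign to each θ a measurable subset of [0,1] with (t,θ) ↦ 𝟙{t ∈ S_θ} jointly measurable, let α(t) = ∫_Θ 𝟙{t ∈ S_θ} dπ(θ), and let L_γ(S, S') = γ·λ(S \ S') + (1−γ)·λ(S' \ S) for γ ∈ [0,1]. If a measurable set Ŝ ⊆ [0,1] attains the infimum of S ↦ ∫_Θ L_γ(S, S_θ) dπ(θ) over all measurable S ⊆ [0,1], then up to λ-null sets {t : α(t) > γ} ⊆ Ŝ ⊆ {t : α(t) ≥ γ}, i.e. λ({t : α(t) > γ} \ Ŝ) = 0 and λ(Ŝ \ {t : α(t) ≥ γ}) = 0. -/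
open MeasureTheory

/-- Lebesgue measure on `[0,1]`, as the restriction of `volume` to `Set.Icc 0 1`. -/
noncomputable def lam : Measure ℝ := volume.restrict (Set.Icc (0:ℝ) 1)

/-- The loss `L_γ(S, S') = γ·λ(S \ S') + (1−γ)·λ(S' \ S)`. -/
noncomputable def Lloss (γ : ℝ) (S S' : Set ℝ) : ℝ :=
  γ * (lam (S \ S')).toReal + (1 - γ) * (lam (S' \ S)).toReal

/-- `α(t) = ∫_Θ 𝟙{t ∈ S_θ} dπ(θ)`. -/
noncomputable def alphaFn {Θ : Type*} [MeasurableSpace Θ] (π : Measure Θ)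
    (S : Θ → Set ℝ) (t : ℝ) : ℝ :=
  ∫ θ, Set.indicator (S θ) (fun _ => (1:ℝ)) t ∂π

/-! By Fubini, `∫ L_γ(T, S_θ) dπ(θ) = (1 - γ) ∫ λ(S_θ) dπ(θ) + ∫_T (γ - α) dλ` for every measurable
`T`, so `Ŝ` minimises `T ↦ ∫_T (γ - α) dλ`. If `Ŝ` missed a non-null part of `{α > γ}`, adding it
would strictly lower this integral; if it contained a non-null part of `{α < γ}`, removing it
would. -/

section SetIntegralMinimizer

variable {X : Type*} [MeasurableSpace X] {μ : Measure X} {g : X → ℝ} {U Ŝ : Set X}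

lemma measure_eq_zero_of_setIntegral_nonpos {A : Set X} (hg : IntegrableOn g A μ)
    (hpos : ∀ x ∈ A, 0 < g x) (hA : MeasurableSet A) (h : ∫ x in A, g x ∂μ ≤ 0) : μ A = 0 := by
  by_contra hA0
  have hnn : 0 ≤ᵐ[μ.restrict A] g := (ae_restrict_mem hA).mono fun x hx => (hpos x hx).le
  have hsupp : Function.support g ∩ A = A :=
    Set.inter_eq_right.2 fun x hx => (hpos x hx).ne'
  have := (setIntegral_pos_iff_support_of_nonneg_ae hnn hg).2
    (by rw [hsupp]; exact pos_iff_ne_zero.2 hA0)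
  linarith

lemma measure_setOf_neg_sdiff_eq_zero_of_isMinOn (hgm : Measurable g) (hg : Integrable g μ)
    (hŜ : MeasurableSet Ŝ) (hŜU : Ŝ ⊆ U) (hUm : MeasurableSet U) (hU : ∀ᵐ x ∂μ, x ∈ U)
    (hmin : IsMinOn (fun T => ∫ x in T, g x ∂μ) {T | MeasurableSet T ∧ T ⊆ U} Ŝ) :
    μ ({x | g x < 0} \ Ŝ) = 0 := by
  set A := {x | g x < 0} \ Ŝ ∩ U
  have hA : MeasurableSet A := ((measurableSet_lt hgm measurable_const).diff hŜ).inter hUm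
  have hadd : ∫ x in Ŝ ∪ A, g x ∂μ = ∫ x in Ŝ, g x ∂μ + ∫ x in A, g x ∂μ :=
    setIntegral_union (Set.disjoint_left.2 fun _ hxŜ hxA => hxA.1.2 hxŜ) hA hg.integrableOn
      hg.integrableOn
  have hle : ∫ x in Ŝ, g x ∂μ ≤ ∫ x in Ŝ ∪ A, g x ∂μ :=
    hmin ⟨hŜ.union hA, Set.union_subset hŜU Set.inter_subset_right⟩
  have hA0 : μ A = 0 := by
    refine measure_eq_zero_of_setIntegral_nonpos (g := -g) hg.neg.integrableOn
      (fun x hx => neg_pos.2 hx.1.1) hA ?_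
    simp only [Pi.neg_apply, integral_neg]
    linarith
  exact measure_mono_null (fun x hx => (em (x ∈ U)).imp (fun hxU => ⟨hx, hxU⟩) id)
    (measure_union_null hA0 hU)

lemma measure_sdiff_setOf_nonpos_eq_zero_of_isMinOn (hgm : Measurable g) (hg : Integrable g μ)
    (hŜ : MeasurableSet Ŝ) (hŜU : Ŝ ⊆ U)
    (hmin : IsMinOn (fun T => ∫ x in T, g x ∂μ) {T | MeasurableSet T ∧ T ⊆ U} Ŝ) :
    μ (Ŝ \ {x | g x ≤ 0}) = 0 := by
  set B := Ŝ \ {x | g x ≤ 0}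
  have hB : MeasurableSet B := hŜ.diff (measurableSet_le hgm measurable_const)
  have hle : ∫ x in Ŝ, g x ∂μ ≤ ∫ x in Ŝ \ B, g x ∂μ :=
    hmin ⟨hŜ.diff hB, Set.sdiff_subset.trans hŜU⟩
  rw [setIntegral_sdiff hB hg.integrableOn Set.sdiff_subset] at hle
  exact measure_eq_zero_of_setIntegral_nonpos hg.integrableOn (fun x hx => not_le.1 hx.2) hB
    (by linarith)

end SetIntegralMinimizer

section Fubini

variable {Θ : Type*} {S : Θ → Set ℝ} {μ : Measure ℝ}

lemma setIntegral_indicator_mem_slice {θ : Θ} (hS : MeasurableSet (S θ)) (A : Set ℝ) :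
    ∫ t in A, {p : ℝ × Θ | p.1 ∈ S p.2}.indicator 1 (t, θ) ∂μ = μ.real (S θ ∩ A) := by
  rw [← measureReal_restrict_apply hS, ← integral_indicator_one hS]
  rfl

variable [MeasurableSpace Θ] {π : Measure Θ}

lemma integrable_indicator_mem_slice [IsFiniteMeasure μ] [IsFiniteMeasure π]
    (hjoint : MeasurableSet {p : ℝ × Θ | p.1 ∈ S p.2}) :
    Integrable ({p : ℝ × Θ | p.1 ∈ S p.2}.indicator (1 : ℝ × Θ → ℝ)) (μ.prod π) :=
  (integrable_const 1).indicator hjoint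

lemma measurable_alphaFn [SFinite π] (hjoint : MeasurableSet {p : ℝ × Θ | p.1 ∈ S p.2}) :
    Measurable (alphaFn π S) :=
  (stronglyMeasurable_const.indicator hjoint).integral_prod_right'.measurable

lemma integrable_alphaFn [IsFiniteMeasure μ] [IsFiniteMeasure π]
    (hjoint : MeasurableSet {p : ℝ × Θ | p.1 ∈ S p.2}) :
    Integrable (alphaFn π S) μ :=
  (integrable_indicator_mem_slice hjoint).integral_prod_left

lemma integrable_measureReal_inter [IsFiniteMeasure μ] [IsFiniteMeasure π]
    (hmeas : ∀ θ, MeasurableSet (S θ)) (hjoint : MeasurableSet {p : ℝ × Θ | p.1 ∈ S p.2})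
    (A : Set ℝ) :
    Integrable (fun θ => μ.real (S θ ∩ A)) π := by
  simpa only [setIntegral_indicator_mem_slice (hmeas _)] using
    (integrable_indicator_mem_slice (μ := μ.restrict A) hjoint).integral_prod_right

lemma integral_measureReal_inter [IsFiniteMeasure μ] [IsFiniteMeasure π]
    (hmeas : ∀ θ, MeasurableSet (S θ)) (hjoint : MeasurableSet {p : ℝ × Θ | p.1 ∈ S p.2})
    (A : Set ℝ) :
    ∫ θ, μ.real (S θ ∩ A) ∂π = ∫ t in A, alphaFn π S t ∂μ := by
  simp only [← setIntegral_indicator_mem_slice (hmeas _)]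
  exact (integral_integral_swap (μ := μ.restrict A)
    (f := fun t θ => {p : ℝ × Θ | p.1 ∈ S p.2}.indicator (1 : ℝ × Θ → ℝ) (t, θ))
    (integrable_indicator_mem_slice hjoint)).symm

end Fubini

instance : IsFiniteMeasure lam := by
  unfold lam; infer_instance

lemma Lloss_eq_sub_measureReal_inter (γ : ℝ) {T S' : Set ℝ} (hT : MeasurableSet T)
    (hS' : MeasurableSet S') :
    Lloss γ T S' = γ * lam.real T + (1 - γ) * lam.real S' - lam.real (S' ∩ T) := by
  have h₁ : lam.real (T \ S') + lam.real (T ∩ S') = lam.real T := measureReal_sdiff_add_inter hS'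
  have h₂ : lam.real (S' \ T) + lam.real (S' ∩ T) = lam.real S' := measureReal_sdiff_add_inter hT
  rw [Set.inter_comm] at h₁
  simp only [Lloss, ← measureReal_def]
  linear_combination γ * h₁ + (1 - γ) * h₂

lemma integral_Lloss_eq_add_setIntegral {Θ : Type*} [MeasurableSpace Θ] {π : Measure Θ}
    [IsProbabilityMeasure π]
    {S : Θ → Set ℝ} (hmeas : ∀ θ, MeasurableSet (S θ))
    (hjoint : MeasurableSet {p : ℝ × Θ | p.1 ∈ S p.2}) (γ : ℝ) {T : Set ℝ} (hT : MeasurableSet T) :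
    ∫ θ, Lloss γ T (S θ) ∂π
      = (1 - γ) * ∫ θ, lam.real (S θ) ∂π + ∫ t in T, (γ - alphaFn π S t) ∂lam := by
  have hS : Integrable (fun θ => lam.real (S θ)) π := by
    simpa only [Set.inter_univ] using integrable_measureReal_inter hmeas hjoint Set.univ
  have hST := integrable_measureReal_inter (μ := lam) (π := π) hmeas hjoint T
  have hc : Integrable (fun _ => γ * lam.real T) π := integrable_const _
  have hcS : Integrable (fun θ => γ * lam.real T + (1 - γ) * lam.real (S θ)) π :=
    hc.add (hS.const_mul _)
  simp only [Lloss_eq_sub_measureReal_inter γ hT (hmeas _)]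
  rw [integral_sub hcS hST, integral_add hc (hS.const_mul _),
    integral_const, integral_const_mul, integral_measureReal_inter hmeas hjoint,
    integral_sub (integrable_const _) (integrable_alphaFn hjoint).integrableOn, setIntegral_const]
  simp only [probReal_univ, smul_eq_mul, one_mul]
  ring

theorem stmt_1_general {Θ : Type*} [MeasurableSpace Θ] (π : Measure Θ) [IsProbabilityMeasure π]
    (S : Θ → Set ℝ) (hmeas : ∀ θ, MeasurableSet (S θ))
    (hjoint : MeasurableSet {p : ℝ × Θ | p.1 ∈ S p.2})
    (γ : ℝ)
    (Shat : Set ℝ) (hShat : MeasurableSet Shat) (hShatsub : Shat ⊆ Set.Icc 0 1)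
    (hopt : ∀ T : Set ℝ, MeasurableSet T → T ⊆ Set.Icc 0 1 →
      ∫ θ, Lloss γ Shat (S θ) ∂π ≤ ∫ θ, Lloss γ T (S θ) ∂π) :
    lam ({t : ℝ | γ < alphaFn π S t} \ Shat) = 0 ∧
    lam (Shat \ {t : ℝ | γ ≤ alphaFn π S t}) = 0 := by
  have hgm : Measurable fun t => γ - alphaFn π S t :=
    measurable_const.sub (measurable_alphaFn hjoint)
  have hg : Integrable (fun t => γ - alphaFn π S t) lam :=
    (integrable_const γ).sub (integrable_alphaFn hjoint)
  have hmin : IsMinOn (fun T => ∫ t in T, γ - alphaFn π S t ∂lam)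
      {T | MeasurableSet T ∧ T ⊆ Set.Icc 0 1} Shat := by
    refine isMinOn_iff.2 fun T ⟨hT, hTsub⟩ => ?_
    have := hopt T hT hTsub
    rwa [integral_Lloss_eq_add_setIntegral hmeas hjoint γ hShat,
      integral_Lloss_eq_add_setIntegral hmeas hjoint γ hT, add_le_add_iff_left] at this
  have hU : ∀ᵐ t ∂lam, t ∈ Set.Icc 0 1 := ae_restrict_mem measurableSet_Icc
  constructor
  · simpa only [sub_neg] using measure_setOf_neg_sdiff_eq_zero_of_isMinOn hgm hg hShat hShatsub
      measurableSet_Icc hU hmin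
  · simpa only [sub_nonpos] using
      measure_sdiff_setOf_nonpos_eq_zero_of_isMinOn hgm hg hShat hShatsub hmin

theorem stmt_1 {Θ : Type*} [MeasurableSpace Θ] (π : Measure Θ) [IsProbabilityMeasure π]
    (S : Θ → Set ℝ) (hsub : ∀ θ, S θ ⊆ Set.Icc 0 1) (hmeas : ∀ θ, MeasurableSet (S θ))
    (hjoint : MeasurableSet {p : ℝ × Θ | p.1 ∈ S p.2})
    (γ : ℝ) (hγ : γ ∈ Set.Icc (0:ℝ) 1)
    (Shat : Set ℝ) (hShat : MeasurableSet Shat) (hShatsub : Shat ⊆ Set.Icc 0 1)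
    (hopt : ∀ T : Set ℝ, MeasurableSet T → T ⊆ Set.Icc 0 1 →
      ∫ θ, Lloss γ Shat (S θ) ∂π ≤ ∫ θ, Lloss γ T (S θ) ∂π) :
    lam ({t : ℝ | γ < alphaFn π S t} \ Shat) = 0 ∧
    lam (Shat \ {t : ℝ | γ ≤ alphaFn π S t}) = 0 :=
  stmt_1_general π S hmeas hjoint γ Shat hShat hShatsub hopt
end

section
/- Let T = [0,1] with Lebesgue measure λ, let (Θ, 𝒜, π) be a probability space, let θ ↦ S_θ assign to each θ a measurable subset of [0,1] with (t,θ) ↦ 𝟙{t ∈ S_θ} jointly measurable, let α(t) = ∫_Θ 𝟙{t ∈ S_θ} dπ(θ), and let L_γ(S, S') = γ·λ(S \ S') + (1−γ)·λ(S' \ S) for γ ∈ [0,1]. Then a measurable set S ⊆ [0,1] satisfies ∫_Θ L_γ(S, S_θ) dπ(θ) = ∫_0^1 min{γ(1 − α(t)), (1−γ)α(t)} dt if and only if for λ-almost every t ∈ [0,1], either α(t) = γ, or (t ∈ S ↔ γ ≤ α(t)). -/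
open MeasureTheory

/-!
By Fubini on `{(t, θ) | t ∈ S θ}`, the posterior expected loss of `T` is `∫ ℓ dλ`, where
`ℓ t = γ * (1 - α t)` on `T` and `ℓ t = (1 - γ) * α t` off `T`. Pointwise `ℓ` dominates
`min (γ * (1 - α t)) ((1 - γ) * α t)`, so the two integrals agree iff `ℓ` attains this minimum
almost everywhere, and `ℓ t` attains it iff `α t = γ` or `t ∈ T` exactly when `γ ≤ α t`.
-/

open Filter Set

section Pointwise

variable (γ a : ℝ) (p : Prop) [Decidable p]

lemma min_le_ite_loss :
    min (γ * (1 - a)) ((1 - γ) * a) ≤ if p then γ * (1 - a) else (1 - γ) * a := by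
  split_ifs
  exacts [min_le_left _ _, min_le_right _ _]

-- Both comparisons reduce to `γ ≤ a`, since `(1 - γ) * a - γ * (1 - a) = a - γ`.
lemma min_eq_ite_loss_iff :
    (min (γ * (1 - a)) ((1 - γ) * a) = if p then γ * (1 - a) else (1 - γ) * a) ↔
      a = γ ∨ (p ↔ γ ≤ a) := by
  have hdiff : (1 - γ) * a - γ * (1 - a) = a - γ := by ring
  split_ifs with hp
  · rw [min_eq_left_iff]
    simp only [hp, true_iff]
    exact ⟨fun _ => Or.inr (by linarith), by rintro (rfl | h) <;> linarith⟩
  · rw [min_eq_right_iff]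
    simp only [hp, false_iff, not_le]
    exact ⟨fun _ => (show a ≤ γ by linarith).eq_or_lt, by rintro (rfl | h) <;> linarith⟩

end Pointwise

section Sections

variable {α β : Type*} [MeasurableSpace α] [MeasurableSpace β] {μ : Measure α} {ν : Measure β}
  [IsFiniteMeasure μ] [IsFiniteMeasure ν] {J : Set (α × β)}

lemma integrable_measureReal_prodMk_left (hJ : MeasurableSet J) :
    Integrable (fun x => ν.real (Prod.mk x ⁻¹' J)) μ :=
  .of_bound (measurable_measure_prodMk_left hJ).ennreal_toReal.aestronglyMeasurable (ν.real univ)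
    (.of_forall fun _ => by
      rw [Real.norm_of_nonneg measureReal_nonneg]; exact measureReal_mono (subset_univ _))

lemma integrable_measureReal_prodMk_right (hJ : MeasurableSet J) :
    Integrable (fun y => μ.real ((fun x => (x, y)) ⁻¹' J)) ν :=
  .of_bound (measurable_measure_prodMk_right hJ).ennreal_toReal.aestronglyMeasurable (μ.real univ)
    (.of_forall fun _ => by
      rw [Real.norm_of_nonneg measureReal_nonneg]; exact measureReal_mono (subset_univ _))

lemma integral_measureReal_prodMk_right_eq (hJ : MeasurableSet J) :
    ∫ y, μ.real ((fun x => (x, y)) ⁻¹' J) ∂ν = ∫ x, ν.real (Prod.mk x ⁻¹' J) ∂μ := by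
  simp only [measureReal_def]
  rw [integral_toReal (measurable_measure_prodMk_right hJ).aemeasurable
      (.of_forall fun _ => measure_lt_top μ _),
    integral_toReal (measurable_measure_prodMk_left hJ).aemeasurable
      (.of_forall fun _ => measure_lt_top ν _),
    ← Measure.prod_apply_symm hJ, Measure.prod_apply hJ]

variable {T : Set α}

lemma integral_measureReal_prodMk_right_diff (hJ : MeasurableSet J) (hT : MeasurableSet T) :
    ∫ y, μ.real ((fun x => (x, y)) ⁻¹' J \ T) ∂ν = ∫ x in Tᶜ, ν.real (Prod.mk x ⁻¹' J) ∂μ := by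
  have hsection (x : α) : ν.real (Prod.mk x ⁻¹' (J \ Prod.fst ⁻¹' T)) =
      Tᶜ.indicator (fun x => ν.real (Prod.mk x ⁻¹' J)) x := by
    by_cases hx : x ∈ T
    · rw [indicator_of_notMem (notMem_compl_iff.2 hx)]; simp [preimage_preimage, hx]
    · rw [indicator_of_mem hx]; congr 1; ext; simp [hx]
  rw [← integral_indicator hT.compl, ← funext hsection]
  exact integral_measureReal_prodMk_right_eq (hJ.diff (hT.preimage measurable_fst))

variable [IsProbabilityMeasure ν]

lemma integral_measureReal_diff_prodMk_right (hJ : MeasurableSet J) (hT : MeasurableSet T) :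
    ∫ y, μ.real (T \ (fun x => (x, y)) ⁻¹' J) ∂ν = ∫ x in T, 1 - ν.real (Prod.mk x ⁻¹' J) ∂μ := by
  have hsection (x : α) : ν.real (Prod.mk x ⁻¹' (Prod.fst ⁻¹' T \ J)) =
      T.indicator (fun x => 1 - ν.real (Prod.mk x ⁻¹' J)) x := by
    by_cases hx : x ∈ T
    · rw [indicator_of_mem hx, ← probReal_compl_eq_one_sub (measurable_prodMk_left hJ)]
      congr 1; ext; simp [hx]
    · rw [indicator_of_notMem hx]; simp [preimage_preimage, hx]
  rw [← integral_indicator hT, ← funext hsection]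
  exact integral_measureReal_prodMk_right_eq ((hT.preimage measurable_fst).diff hJ)

open Classical in
lemma integral_weighted_measureReal_diff_prodMk_right (hJ : MeasurableSet J)
    (hT : MeasurableSet T) (γ : ℝ) :
    ∫ y, γ * μ.real (T \ (fun x => (x, y)) ⁻¹' J) +
        (1 - γ) * μ.real ((fun x => (x, y)) ⁻¹' J \ T) ∂ν =
      ∫ x, T.piecewise (fun x => γ * (1 - ν.real (Prod.mk x ⁻¹' J)))
        (fun x => (1 - γ) * ν.real (Prod.mk x ⁻¹' J)) x ∂μ := by
  have hdiff : Integrable (fun y => μ.real (T \ (fun x => (x, y)) ⁻¹' J)) ν :=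
    integrable_measureReal_prodMk_right ((hT.preimage measurable_fst).diff hJ)
  have hdiff' : Integrable (fun y => μ.real ((fun x => (x, y)) ⁻¹' J \ T)) ν :=
    integrable_measureReal_prodMk_right (hJ.diff (hT.preimage measurable_fst))
  have hα := integrable_measureReal_prodMk_left (μ := μ) (ν := ν) hJ
  have hlow : Integrable (fun x => γ * (1 - ν.real (Prod.mk x ⁻¹' J))) μ :=
    ((integrable_const 1).sub hα).const_mul γ
  rw [integral_add (hdiff.const_mul γ) (hdiff'.const_mul (1 - γ)),
    integral_const_mul, integral_const_mul, integral_measureReal_diff_prodMk_right hJ hT,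
    integral_measureReal_prodMk_right_diff hJ hT,
    integral_piecewise hT hlow.integrableOn (hα.const_mul (1 - γ)).integrableOn,
    integral_const_mul, integral_const_mul]

end Sections

instance inst_s5 : IsFiniteMeasure lam := by
  unfold lam; infer_instance

lemma alphaFn_eq_measureReal {Θ : Type*} [MeasurableSpace Θ] (π : Measure Θ) (S : Θ → Set ℝ)
    (t : ℝ) (hS : MeasurableSet {θ | t ∈ S θ}) : alphaFn π S t = π.real {θ | t ∈ S θ} := by
  rw [alphaFn, ← integral_indicator_one hS]
  rfl

theorem stmt_5_general {Θ : Type*} [MeasurableSpace Θ] (π : Measure Θ) [IsProbabilityMeasure π]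
    (S : Θ → Set ℝ) (hjoint : MeasurableSet {p : ℝ × Θ | p.1 ∈ S p.2})
    (γ : ℝ) (T : Set ℝ) (hT : MeasurableSet T) :
    (∫ θ, Lloss γ T (S θ) ∂π
        = ∫ t, min (γ * (1 - alphaFn π S t)) ((1 - γ) * alphaFn π S t) ∂lam)
      ↔ (∀ᵐ t ∂lam, alphaFn π S t = γ ∨ (t ∈ T ↔ γ ≤ alphaFn π S t)) := by
  classical
  have hα : alphaFn π S = fun t => π.real (Prod.mk t ⁻¹' {p : ℝ × Θ | p.1 ∈ S p.2}) :=
    funext fun t => alphaFn_eq_measureReal π S t (measurable_prodMk_left hjoint)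
  have hαi : Integrable (alphaFn π S) lam := hα ▸ integrable_measureReal_prodMk_left hjoint
  have hloss : ∫ θ, Lloss γ T (S θ) ∂π = ∫ t, T.piecewise (fun t => γ * (1 - alphaFn π S t))
      (fun t => (1 - γ) * alphaFn π S t) t ∂lam := by
    rw [hα]
    exact integral_weighted_measureReal_diff_prodMk_right hjoint hT γ
  have hlow : Integrable (fun t => γ * (1 - alphaFn π S t)) lam :=
    ((integrable_const 1).sub hαi).const_mul γ
  have hhigh : Integrable (fun t => (1 - γ) * alphaFn π S t) lam := hαi.const_mul (1 - γ)
  have hmin : Integrable (fun t => min (γ * (1 - alphaFn π S t)) ((1 - γ) * alphaFn π S t)) lam :=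
    hlow.inf hhigh
  rw [hloss, eq_comm, integral_eq_iff_of_ae_le hmin
    (.piecewise hT hlow.integrableOn hhigh.integrableOn)
    (.of_forall fun t => min_le_ite_loss _ _ _)]
  exact eventually_congr (.of_forall fun t => min_eq_ite_loss_iff _ _ _)

theorem stmt_5 {Θ : Type*} [MeasurableSpace Θ] (π : Measure Θ) [IsProbabilityMeasure π]
    (S : Θ → Set ℝ) (hsub : ∀ θ, S θ ⊆ Set.Icc 0 1) (hmeas : ∀ θ, MeasurableSet (S θ))
    (hjoint : MeasurableSet {p : ℝ × Θ | p.1 ∈ S p.2})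
    (γ : ℝ) (hγ : γ ∈ Set.Icc (0:ℝ) 1)
    (T : Set ℝ) (hT : MeasurableSet T) (hTsub : T ⊆ Set.Icc 0 1) :
    (∫ θ, Lloss γ T (S θ) ∂π
        = ∫ t, min (γ * (1 - alphaFn π S t)) ((1 - γ) * alphaFn π S t) ∂lam)
      ↔ (∀ᵐ t ∂lam, alphaFn π S t = γ ∨ (t ∈ T ↔ γ ≤ alphaFn π S t)) :=
  stmt_5_general π S hjoint γ T hT
end
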